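/- arXiv:1701.06300 — 5 statements merged into one kernel-verified Lean document; each statement's English description precedes it below -/
import Mathlib

section
/- Let n ≥ 1 be a natural number, let α be a real number with n − 1 < α < n, and let f : ℝ → ℝ be n times continuously differentiable. Then the left-sided Caputo fractional derivative of order α with base point a, namely x ↦ (1/Γ(n−α)) ∫_a^x (x−z)^{n−α−1} f⁽ⁿ⁾(z) dz, tends to 0 as x tends to a from the right. (Consequently the local fractional derivative of order α of an n-times differentiable function, being the limit as x → a⁺ of its Caputo derivative, is zero for every non-integer α with n−1 < α < n.) -/
/-!
The Caputo derivative is the Riemann–Liouville integral of order `β = n - α > 0` of `f⁽ⁿ⁾`.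
Since `f⁽ⁿ⁾` is continuous, it is bounded by some `C` near `a`, and integrating the kernel gives
`|∫ z in a..x, (x - z) ^ (β - 1) * f⁽ⁿ⁾ z| ≤ C (x - a) ^ β / β`, which tends to `0` as `x → a⁺`.
-/

open Real MeasureTheory Filter Topology intervalIntegral

section FractionalKernel

variable {E : Type*} [NormedAddCommGroup E] [NormedSpace ℝ E] {β : ℝ}

lemma integral_sub_rpow_sub_one (hβ : 0 < β) (a x : ℝ) :
    ∫ z in a..x, (x - z) ^ (β - 1) = (x - a) ^ β / β := by
  rw [integral_comp_sub_left (fun z => z ^ (β - 1)) x, sub_self,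
    integral_rpow (Or.inl (by linarith)), sub_add_cancel, zero_rpow hβ.ne', sub_zero]

lemma intervalIntegrable_sub_rpow_sub_one (hβ : 0 < β) (a x : ℝ) :
    IntervalIntegrable (fun z => (x - z) ^ (β - 1)) volume a x := by
  simpa using ((intervalIntegrable_rpow' (a := 0) (b := x - a)
    (by linarith : (-1 : ℝ) < β - 1)).comp_sub_left x).symm

lemma norm_integral_sub_rpow_smul_le {g : ℝ → E} {a x C : ℝ} (hβ : 0 < β) (hax : a ≤ x)
    (hg : ∀ z ∈ Set.Ioc a x, ‖g z‖ ≤ C) :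
    ‖∫ z in a..x, (x - z) ^ (β - 1) • g z‖ ≤ C * ((x - a) ^ β / β) := by
  rw [← integral_sub_rpow_sub_one hβ, ← intervalIntegral.integral_const_mul]
  refine norm_integral_le_of_norm_le hax (ae_of_all _ fun z hz => ?_)
    ((intervalIntegrable_sub_rpow_sub_one hβ a x).const_mul C)
  have hxz : 0 ≤ (x - z) ^ (β - 1) := rpow_nonneg (sub_nonneg.mpr hz.2) _
  rw [norm_smul, norm_of_nonneg hxz, mul_comm C]
  exact mul_le_mul_of_nonneg_left (hg z hz) hxz

lemma tendsto_sub_rpow_nhdsGT (hβ : 0 < β) (a : ℝ) :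
    Tendsto (fun x : ℝ => (x - a) ^ β) (𝓝[>] a) (𝓝 0) := by
  have hcont : ContinuousAt (fun x : ℝ => (x - a) ^ β) a :=
    (continuousAt_id.sub continuousAt_const).rpow_const (Or.inr hβ.le)
  simpa [zero_rpow hβ.ne'] using hcont.tendsto.mono_left nhdsWithin_le_nhds

theorem tendsto_integral_sub_rpow_smul_nhdsGT {g : ℝ → E} {a : ℝ} (hβ : 0 < β)
    (hg : IsBoundedUnder (· ≤ ·) (𝓝[>] a) fun z => ‖g z‖) :
    Tendsto (fun x => ∫ z in a..x, (x - z) ^ (β - 1) • g z) (𝓝[>] a) (𝓝 0) := by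
  obtain ⟨C, hC⟩ := hg
  obtain ⟨u, hau, hu⟩ := mem_nhdsGT_iff_exists_Ioo_subset.mp (eventually_map.mp hC)
  have hbound : ∀ᶠ x in 𝓝[>] a,
      ‖∫ z in a..x, (x - z) ^ (β - 1) • g z‖ ≤ C * ((x - a) ^ β / β) := by
    filter_upwards [Ioo_mem_nhdsGT hau] with x hx
    exact norm_integral_sub_rpow_smul_le hβ hx.1.le
      fun z hz => hu ⟨hz.1, hz.2.trans_lt hx.2⟩
  refine squeeze_zero_norm' hbound ?_
  simpa using ((tendsto_sub_rpow_nhdsGT hβ a).div_const β).const_mul C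

end FractionalKernel

theorem caputo_tendsto_zero_general (n : ℕ) (α : ℝ)
    (hα2 : α < n) (f : ℝ → ℝ) (hf : ContDiff ℝ n f) (a : ℝ) :
    Tendsto (fun x : ℝ =>
        (1 / Real.Gamma ((n : ℝ) - α)) *
          ∫ z in a..x, (x - z) ^ ((n : ℝ) - α - 1) * iteratedDeriv n f z)
      (𝓝[>] a) (𝓝 0) := by
  have hβ : 0 < (n : ℝ) - α := sub_pos.mpr hα2
  have hbounded : IsBoundedUnder (· ≤ ·) (𝓝[>] a) fun z => ‖iteratedDeriv n f z‖ :=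
    ((hf.continuous_iteratedDeriv n le_rfl).norm.tendsto a).mono_left
      nhdsWithin_le_nhds |>.isBoundedUnder_le
  simpa using (tendsto_integral_sub_rpow_smul_nhdsGT hβ hbounded).const_mul _

theorem caputo_tendsto_zero (n : ℕ) (hn : 1 ≤ n) (α : ℝ)
    (hα1 : (n : ℝ) - 1 < α) (hα2 : α < n) (f : ℝ → ℝ) (hf : ContDiff ℝ n f) (a : ℝ) :
    Tendsto (fun x : ℝ =>
        (1 / Real.Gamma ((n : ℝ) - α)) *
          ∫ z in a..x, (x - z) ^ ((n : ℝ) - α - 1) * iteratedDeriv n f z)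
      (𝓝[>] a) (𝓝 0) :=
  caputo_tendsto_zero_general n α hα2 f hf a
end

section
/- Let a < b be real numbers, let f : ℝ → ℝ be continuous on [a, b], and let μ > 0. Then μ · (x − a)^{−μ} · ∫_a^x (x − z)^{μ−1} f(z) dz tends to f(a) as x tends to a from the right. (Equivalently, the Riemann–Liouville fractional integral of order μ of f satisfies (I^μ_a f)(x) ∼ f(a) (x − a)^μ / Γ(μ+1) as x → a⁺.) -/
/-!
The expression is `∫_a^x K_x(z) f(z) dz` for the kernel `K_x(z) = μ (x - a)^(-μ) (x - z)^(μ - 1)`,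
which is nonnegative on `[a, x]` with total mass `μ (x - a)^(-μ) · (x - a)^μ / μ = 1`. Integrating
against such a kernel averages `f` over `[a, x]`, so the distance to `f a` is at most the
oscillation of `f` on `[a, x]`, which tends to `0` by continuity at `a`.
-/

open Real MeasureTheory Filter Topology Set

lemma eventually_forall_Ioc_of_eventually_nhdsGT {a : ℝ} {p : ℝ → Prop}
    (hp : ∀ᶠ z in 𝓝[>] a, p z) : ∀ᶠ x in 𝓝[>] a, ∀ z ∈ Ioc a x, p z := by
  obtain ⟨u, hau, hu⟩ := mem_nhdsGT_iff_exists_Ioo_subset.1 hp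
  filter_upwards [Ioo_mem_nhdsGT hau] with x hx z hz
  exact hu ⟨hz.1, hz.2.trans_lt hx.2⟩

theorem tendsto_intervalIntegral_smul_of_normalized_kernel {E : Type*} [NormedAddCommGroup E] [NormedSpace ℝ E]
    [CompleteSpace E] {ν : Measure ℝ} {a : ℝ} {K : ℝ → ℝ → ℝ} {f : ℝ → E}
    (hf : Tendsto f (𝓝[>] a) (𝓝 (f a)))
    (hK_nonneg : ∀ᶠ x in 𝓝[>] a, ∀ z ∈ Ioc a x, 0 ≤ K x z)
    (hK_one : ∀ᶠ x in 𝓝[>] a, ∫ z in a..x, K x z ∂ν = 1)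
    (hK_int : ∀ᶠ x in 𝓝[>] a, IntervalIntegrable (K x) ν a x)
    (hKf_int : ∀ᶠ x in 𝓝[>] a, IntervalIntegrable (fun z => K x z • f z) ν a x) :
    Tendsto (fun x => ∫ z in a..x, K x z • f z ∂ν) (𝓝[>] a) (𝓝 (f a)) := by
  refine Metric.tendsto_nhds.2 fun ε hε => ?_
  have hclose := eventually_forall_Ioc_of_eventually_nhdsGT
    (Metric.tendsto_nhds.1 hf (ε / 2) (half_pos hε))
  filter_upwards [self_mem_nhdsWithin, hclose, hK_nonneg, hK_one, hK_int, hKf_int]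
    with x hax hclose hK_nonneg hK_one hK_int hKf_int
  have hsub : ∫ z in a..x, K x z • f z ∂ν - f a = ∫ z in a..x, K x z • (f z - f a) ∂ν := by
    simp_rw [smul_sub]
    rw [intervalIntegral.integral_sub hKf_int (hK_int.smul_continuousOn continuousOn_const),
      intervalIntegral.integral_smul_const, hK_one, one_smul]
  have hbound : ∀ z ∈ Ioc a x, ‖K x z • (f z - f a)‖ ≤ K x z * (ε / 2) := fun z hz => by
    rw [norm_smul, Real.norm_of_nonneg (hK_nonneg z hz), ← dist_eq_norm]
    exact mul_le_mul_of_nonneg_left (hclose z hz).le (hK_nonneg z hz)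
  rw [dist_eq_norm, hsub]
  calc ‖∫ z in a..x, K x z • (f z - f a) ∂ν‖ ≤ ∫ z in a..x, K x z * (ε / 2) ∂ν :=
        intervalIntegral.norm_integral_le_of_norm_le hax.le (ae_of_all _ hbound)
          (hK_int.mul_const _)
    _ = ε / 2 := by rw [intervalIntegral.integral_mul_const, hK_one, one_mul]
    _ < ε := half_lt_self hε

lemma intervalIntegrable_sub_rpow {μ : ℝ} (hμ : 0 < μ) (a x : ℝ) :
    IntervalIntegrable (fun z => (x - z) ^ (μ - 1)) volume a x := by
  simpa using ((intervalIntegral.intervalIntegrable_rpow' (r := μ - 1) (a := x - x) (b := x - a)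
    (by linarith)).comp_sub_left x).symm

lemma integral_sub_rpow {μ : ℝ} (hμ : 0 < μ) (a x : ℝ) :
    ∫ z in a..x, (x - z) ^ (μ - 1) = (x - a) ^ μ / μ := by
  rw [intervalIntegral.integral_comp_sub_left (fun t => t ^ (μ - 1)) x,
    integral_rpow (Or.inl (by linarith)), sub_self, sub_add_cancel, zero_rpow hμ.ne', sub_zero]

lemma integral_const_mul_sub_rpow_eq_one {μ a x : ℝ} (hμ : 0 < μ) (hax : a < x) :
    ∫ z in a..x, μ * (x - a) ^ (-μ) * (x - z) ^ (μ - 1) = 1 := by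
  have hxa : 0 < (x - a) ^ μ := rpow_pos_of_pos (sub_pos.2 hax) μ
  rw [intervalIntegral.integral_const_mul, integral_sub_rpow hμ, rpow_neg (sub_pos.2 hax).le]
  field_simp

theorem rl_integral_asymptotic (a b : ℝ) (hab : a < b) (f : ℝ → ℝ)
    (hf : ContinuousOn f (Set.Icc a b)) (μ : ℝ) (hμ : 0 < μ) :
    Tendsto (fun x : ℝ =>
        μ * (x - a) ^ (-μ) * ∫ z in a..x, (x - z) ^ (μ - 1) * f z)
      (𝓝[>] a) (𝓝 (f a)) := by
  have hfa : Tendsto f (𝓝[>] a) (𝓝 (f a)) :=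
    (hf a (left_mem_Icc.2 hab.le)).mono_of_mem_nhdsWithin (Icc_mem_nhdsGT hab)
  have hK_int (x : ℝ) : IntervalIntegrable (fun z => μ * (x - a) ^ (-μ) * (x - z) ^ (μ - 1))
      volume a x :=
    (intervalIntegrable_sub_rpow hμ a x).const_mul (μ * (x - a) ^ (-μ))
  refine (tendsto_intervalIntegral_smul_of_normalized_kernel hfa ?_ ?_ (.of_forall hK_int) ?_).congr fun x => ?_
  · filter_upwards [self_mem_nhdsWithin] with x hax z hz
    have : 0 ≤ x - a := sub_nonneg.2 (le_of_lt hax)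
    have : 0 ≤ x - z := sub_nonneg.2 hz.2
    positivity
  · filter_upwards [self_mem_nhdsWithin] with x hax
    exact integral_const_mul_sub_rpow_eq_one hμ hax
  · filter_upwards [Ioo_mem_nhdsGT hab] with x hx
    exact (hK_int x).mul_continuousOn
      (hf.mono (uIcc_of_le hx.1.le ▸ Icc_subset_Icc le_rfl hx.2.le))
  · simp only [smul_eq_mul, mul_assoc, intervalIntegral.integral_const_mul]
end

section
/- Let α and β be real numbers with 0 < α < 1 and β > −1, let a be a real number, and let x > a. Then the function y ↦ (1/Γ(1−α)) ∫_a^y (y − z)^{−α} (z − a)^β dz is differentiable at x with derivative (Γ(β+1)/Γ(β+1−α)) · (x − a)^{β−α}. (This is the formula for the left-sided Riemann–Liouville fractional derivative of order α of the power function (x−a)^β.) -/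
/-!
The substitution `z = a + (y - a) t` turns the integral into `(y - a) ^ (β + 1 - α)` times the
Beta integral `B(β + 1, 1 - α) = Γ(β + 1) Γ(1 - α) / Γ(β + 2 - α)`. Near `x` the function is
therefore `Γ(β + 1) (y - a) ^ (β + 1 - α) / Γ(β + 2 - α)`, and the power rule together with
`Γ(s + 1) = s Γ(s)` gives the derivative.
-/

open Real MeasureTheory intervalIntegral

/-- Holds at the poles of `Γ` too: there Mathlib's `Gamma` is `0`, matching the zeros of `1 / Γ`. -/
theorem Real.inv_Gamma_eq_self_mul_inv_Gamma_add_one (s : ℝ) :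
    (Gamma s)⁻¹ = s * (Gamma (s + 1))⁻¹ := by
  rcases ne_or_eq s 0 with hs | rfl
  · rw [Gamma_add_one hs, mul_inv, mul_inv_cancel_left₀ hs]
  · rw [Gamma_zero, inv_zero, zero_mul]

theorem Real.integral_rpow_mul_one_sub_rpow {u v : ℝ} (hu : 0 < u) (hv : 0 < v) :
    ∫ t in (0 : ℝ)..1, t ^ (u - 1) * (1 - t) ^ (v - 1) = Gamma u * Gamma v / Gamma (u + v) := by
  have hB := Complex.betaIntegral_eq_Gamma_mul_div u v (by simpa) (by simpa)
  rw [← Complex.ofReal_add, Complex.Gamma_ofReal, Complex.Gamma_ofReal, Complex.Gamma_ofReal,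
    Complex.betaIntegral] at hB
  apply Complex.ofReal_injective
  rw [← integral_ofReal]
  push_cast
  rw [← hB]
  refine integral_congr fun t ht => ?_
  rw [Set.uIcc_of_le zero_le_one] at ht
  rw [Complex.ofReal_cpow ht.1, Complex.ofReal_cpow (sub_nonneg.2 ht.2)]
  push_cast
  rfl

theorem integral_sub_rpow_mul_sub_rpow_eq_mul_integral (r s : ℝ) {a y : ℝ} (hay : a < y) :
    ∫ z in a..y, (y - z) ^ s * (z - a) ^ r =
      (y - a) ^ (r + s + 1) * ∫ t in (0 : ℝ)..1, t ^ r * (1 - t) ^ s := by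
  have hya : 0 < y - a := sub_pos.2 hay
  have hsub := smul_integral_comp_mul_add (a := 0) (b := 1)
    (fun z => (y - z) ^ s * (z - a) ^ r) (y - a) a
  simp only [mul_zero, zero_add, mul_one, sub_add_cancel, smul_eq_mul] at hsub
  rw [← hsub, ← intervalIntegral.integral_const_mul, ← intervalIntegral.integral_const_mul]
  refine integral_congr fun t ht => ?_
  rw [Set.uIcc_of_le zero_le_one] at ht
  rw [show y - ((y - a) * t + a) = (y - a) * (1 - t) by ring, add_sub_cancel_right,
    mul_rpow hya.le (sub_nonneg.2 ht.2), mul_rpow hya.le ht.1, rpow_add hya, rpow_add hya,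
    rpow_one]
  ring

theorem hasDerivAt_sub_rpow_div_Gamma_add_one (p : ℝ) {a x : ℝ} (hx : x ≠ a) :
    HasDerivAt (fun y => (y - a) ^ p / Gamma (p + 1)) ((x - a) ^ (p - 1) / Gamma p) x := by
  refine ((((hasDerivAt_id x).sub_const a).rpow_const (Or.inl (sub_ne_zero.2 hx))).div_const
    (Gamma (p + 1))).congr_deriv ?_
  rw [div_eq_mul_inv, div_eq_mul_inv, inv_Gamma_eq_self_mul_inv_Gamma_add_one p]
  simp only [id, one_mul]
  ring

theorem integral_sub_rpow_mul_sub_rpow {r s a y : ℝ} (hr : -1 < r) (hs : -1 < s) (hay : a < y) :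
    ∫ z in a..y, (y - z) ^ s * (z - a) ^ r =
      Gamma (r + 1) * Gamma (s + 1) / Gamma (r + s + 2) * (y - a) ^ (r + s + 1) := by
  have hbeta := integral_rpow_mul_one_sub_rpow (neg_lt_iff_pos_add.1 hr) (neg_lt_iff_pos_add.1 hs)
  simp only [add_sub_cancel_right] at hbeta
  rw [integral_sub_rpow_mul_sub_rpow_eq_mul_integral r s hay, hbeta,
    show r + 1 + (s + 1) = r + s + 2 by ring, mul_comm]

theorem rl_derivative_power_rule_general (α β : ℝ) (hα2 : α < 1)
    (hβ : -1 < β) (a x : ℝ) (hax : a < x) :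
    HasDerivAt
      (fun y : ℝ => (1 / Real.Gamma (1 - α)) * ∫ z in a..y, (y - z) ^ (-α) * (z - a) ^ β)
      ((Real.Gamma (β + 1) / Real.Gamma (β + 1 - α)) * (x - a) ^ (β - α)) x := by
  have hGamma : Gamma (1 - α) ≠ 0 := (Gamma_pos_of_pos (sub_pos.2 hα2)).ne'
  have hpower : (fun y : ℝ => (1 / Gamma (1 - α)) * ∫ z in a..y, (y - z) ^ (-α) * (z - a) ^ β)
      =ᶠ[nhds x] fun y => Gamma (β + 1) * ((y - a) ^ (β + 1 - α) / Gamma (β + 1 - α + 1)) := by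
    filter_upwards [Ioi_mem_nhds hax] with y hy
    rw [integral_sub_rpow_mul_sub_rpow hβ (by linarith) hy, show -α + 1 = 1 - α by ring,
      show β + -α + 2 = β + 1 - α + 1 by ring, show β + -α + 1 = β + 1 - α by ring]
    field_simp
  refine (((hasDerivAt_sub_rpow_div_Gamma_add_one (β + 1 - α) hax.ne').const_mul
    (Gamma (β + 1))).congr_of_eventuallyEq hpower).congr_deriv ?_
  rw [show β + 1 - α - 1 = β - α by ring]
  ring

theorem rl_derivative_power_rule (α β : ℝ) (hα1 : 0 < α) (hα2 : α < 1)
    (hβ : -1 < β) (a x : ℝ) (hax : a < x) :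
    HasDerivAt
      (fun y : ℝ => (1 / Real.Gamma (1 - α)) * ∫ z in a..y, (y - z) ^ (-α) * (z - a) ^ β)
      ((Real.Gamma (β + 1) / Real.Gamma (β + 1 - α)) * (x - a) ^ (β - α)) x :=
  rl_derivative_power_rule_general α β hα2 hβ a x hax
end

section
/- Let m ≥ 1 be a natural number and let α be a real number with 0 < α < 2. Then α · Γ(m+1) · Γ(2−α) = Γ(m+2−α) holds if and only if α = 1. (Equivalently: the unviolated Leibniz rule D^α(x^m · x) = (D^α x^m)·x + x^m·(D^α x), applied with the power-rule fractional derivative D^α x^β = (Γ(β+1)/Γ(β+1−α)) x^{β−α}, holds if and only if α = 1; hence the unviolated Leibniz rule cannot hold for derivatives of order α ≠ 1.) -/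
lemma gamma_shift_prod (α : ℝ) (hα2 : α < 2) (m : ℕ) :
    Real.Gamma ((m : ℝ) + 2 - α)
      = (∏ k ∈ Finset.range m, ((k : ℝ) + 2 - α)) * Real.Gamma (2 - α) := by
  induction m with
  | zero => simp
  | succ n ih =>
      have h : ((n : ℝ) + 2 - α) ≠ 0 := by
        have : (0:ℝ) < (n : ℝ) + 2 - α := by
          have : (0:ℝ) ≤ (n:ℝ) := Nat.cast_nonneg n
          linarith
        linarith
      have : ((n+1 : ℕ) : ℝ) + 2 - α = ((n : ℝ) + 2 - α) + 1 := by
        push_cast; ring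
      rw [this, Real.Gamma_add_one h, ih, Finset.prod_range_succ]
      ring

theorem gamma_leibniz_iff_alpha_one (m : ℕ) (hm : 1 ≤ m) (α : ℝ)
    (hα1 : 0 < α) (hα2 : α < 2) :
    α * Real.Gamma ((m : ℝ) + 1) * Real.Gamma (2 - α) = Real.Gamma ((m : ℝ) + 2 - α)
      ↔ α = 1 := by
  have hGpos : 0 < Real.Gamma (2 - α) := Real.Gamma_pos_of_pos (by linarith)
  have hGam : ∀ n : ℕ, Real.Gamma ((n : ℝ) + 1) = ∏ k ∈ Finset.range n, ((k : ℝ) + 1) := by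
    intro n
    rw [Real.Gamma_nat_eq_factorial]
    induction n with
    | zero => simp
    | succ n ih =>
        rw [Finset.prod_range_succ, ← ih]
        push_cast [Nat.factorial_succ]
        ring
  rw [gamma_shift_prod α hα2 m, hGam m]
  constructor
  · intro h
    by_contra hne
    have hP1pos : 0 < ∏ k ∈ Finset.range m, ((k : ℝ) + 1) :=
      Finset.prod_pos (fun k _ => by positivity)
    have hmem : 0 ∈ Finset.range m := Finset.mem_range.mpr (by omega)
    rcases lt_or_gt_of_ne hne with hlt | hgt
    · -- α < 1 : product with 2-α factors is strictly bigger, α * P1 < P1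
      have hP : (∏ k ∈ Finset.range m, ((k : ℝ) + 1))
          < ∏ k ∈ Finset.range m, ((k : ℝ) + 2 - α) := by
        apply Finset.prod_lt_prod_of_nonempty
        · intro k _; positivity
        · intro k _; linarith
        · exact ⟨0, hmem⟩
      have : α * ∏ k ∈ Finset.range m, ((k : ℝ) + 1)
          < ∏ k ∈ Finset.range m, ((k : ℝ) + 1) := by nlinarith
      have heq : α * ∏ k ∈ Finset.range m, ((k : ℝ) + 1)
          = ∏ k ∈ Finset.range m, ((k : ℝ) + 2 - α) :=
        mul_right_cancel₀ (ne_of_gt hGpos) (by linear_combination h)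
      linarith
    · -- α > 1
      have hP : (∏ k ∈ Finset.range m, ((k : ℝ) + 2 - α))
          < ∏ k ∈ Finset.range m, ((k : ℝ) + 1) := by
        apply Finset.prod_lt_prod_of_nonempty
        · intro k _
          have : (0:ℝ) ≤ (k:ℝ) := Nat.cast_nonneg k
          linarith
        · intro k _; linarith
        · exact ⟨0, hmem⟩
      have : (∏ k ∈ Finset.range m, ((k : ℝ) + 1))
          < α * ∏ k ∈ Finset.range m, ((k : ℝ) + 1) := by nlinarith
      have heq : α * ∏ k ∈ Finset.range m, ((k : ℝ) + 1)
          = ∏ k ∈ Finset.range m, ((k : ℝ) + 2 - α) :=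
        mul_right_cancel₀ (ne_of_gt hGpos) (by linear_combination h)
      linarith
  · rintro rfl
    norm_num
    exact Finset.prod_congr rfl fun k _ => by ring
end

section
/- Let α be a real number with 0 < α < 2. Then the statement 'for all x > 0, (Γ(3)/Γ(3−α)) x^{2−α} = 2 x · (Γ(2)/Γ(2−α)) x^{1−α}' holds if and only if α = 1. (That is, the unviolated Leibniz rule D^α(x·x) = (D^α x)·x + x·(D^α x) for the power-rule fractional derivative D^α x^β = (Γ(β+1)/Γ(β+1−α)) x^{β−α} is valid precisely when α = 1.) -/
theorem leibniz_for_x_sq_iff_alpha_one (α : ℝ) (hα1 : 0 < α) (hα2 : α < 2) :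
    (∀ x : ℝ, 0 < x →
        (Real.Gamma 3 / Real.Gamma (3 - α)) * x ^ (2 - α)
          = 2 * x * (Real.Gamma 2 / Real.Gamma (2 - α)) * x ^ (1 - α))
      ↔ α = 1 := by
  have h2α : (0:ℝ) < 2 - α := by linarith
  have hGpos : 0 < Real.Gamma (2 - α) := Real.Gamma_pos_of_pos h2α
  have hG3 : Real.Gamma 3 = 2 := by
    rw [show (3:ℝ) = 2 + 1 by norm_num, Real.Gamma_add_one (by norm_num),
      Real.Gamma_two]; norm_num
  have hG3α : Real.Gamma (3 - α) = (2 - α) * Real.Gamma (2 - α) := by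
    rw [show (3:ℝ) - α = (2 - α) + 1 by ring, Real.Gamma_add_one (ne_of_gt h2α)]
  constructor
  · intro h
    have h1 := h 1 one_pos
    simp [Real.one_rpow, hG3, hG3α, Real.Gamma_two] at h1
    field_simp at h1
    nlinarith [hGpos]
  · rintro rfl
    intro x hx
    norm_num [hG3, Real.Gamma_two, Real.Gamma_one, Real.rpow_one, Real.rpow_zero]
end
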